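/- Let S be a finite set and V₁, …, Vₙ finite sets that are pairwise disjoint and disjoint from S, let D be a finite type, let σ : S → D, and for each i let Pᵢ be a predicate on functions S ∪ Vᵢ → D. Then the number of functions γ : S ∪ V₁ ∪ … ∪ Vₙ → D with γ|_S = σ and Pᵢ(γ|_{S ∪ Vᵢ}) for all i equals the product over i = 1, …, n of the number of functions γᵢ : S ∪ Vᵢ → D with γᵢ|_S = σ and Pᵢ(γᵢ). -/
import Mathlib


/-- Let `S` be a finite set and `V 0, …, V (n-1)` finite sets that are
pairwise disjoint and disjoint from `S`, let `D` be a finite type, let `σ : S → D`,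
and for each `i` let `P i` be a predicate on functions `S ∪ V i → D`.  Then the number
of functions `γ : S ∪ V 0 ∪ … ∪ V (n-1) → D` that restrict to `σ` on `S` and whose
restriction to `S ∪ V i` satisfies `P i` for all `i` equals the product over `i` of
the number of functions `γᵢ : S ∪ V i → D` that restrict to `σ` on `S` and satisfy
`P i`. -/
theorem count_factorization {α : Type*} [DecidableEq α] {D : Type*} [Fintype D]
    {n : ℕ} (S : Finset α) (V : Fin n → Finset α)
    (hVV : ∀ i j : Fin n, i ≠ j → Disjoint (V i) (V j))
    (hSV : ∀ i : Fin n, Disjoint S (V i))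
    (σ : ((S : Finset α) : Set α) → D)
    (P : ∀ i : Fin n, (((S ∪ V i : Finset α) : Set α) → D) → Prop)
    (hsub : ∀ i : Fin n, ((S ∪ V i : Finset α) : Set α) ⊆
      ((S ∪ Finset.univ.biUnion V : Finset α) : Set α))
    (hS : ((S : Finset α) : Set α) ⊆ ((S ∪ Finset.univ.biUnion V : Finset α) : Set α))
    (hSi : ∀ i : Fin n, ((S : Finset α) : Set α) ⊆ ((S ∪ V i : Finset α) : Set α)) :
    Set.ncard {γ : ((S ∪ Finset.univ.biUnion V : Finset α) : Set α) → D |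
        (∀ x : ((S : Finset α) : Set α), γ (Set.inclusion hS x) = σ x) ∧
        (∀ i : Fin n, P i (γ ∘ Set.inclusion (hsub i)))} =
      ∏ i : Fin n, Set.ncard {γi : (((S ∪ V i : Finset α) : Set α)) → D |
        (∀ x : ((S : Finset α) : Set α), γi (Set.inclusion (hSi i) x) = σ x) ∧ P i γi} := by
  classical
  simp only [← Nat.card_coe_set_eq]
  rw [← Nat.card_pi]
  refine Nat.card_congr ?_
  have exI : ∀ x : ((S ∪ Finset.univ.biUnion V : Finset α) : Set α), x.1 ∉ S →
      ∃ i : Fin n, x.1 ∈ V i := by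
    intro x hx
    have hx2 := x.2
    simp only [Finset.coe_union, Set.mem_union, Finset.mem_coe, Finset.mem_biUnion] at hx2
    rcases hx2 with h | ⟨i, _, hi⟩
    · exact absurd h hx
    · exact ⟨i, hi⟩
  set g : (∀ i : Fin n, {γi : (((S ∪ V i : Finset α) : Set α)) → D //
      (∀ x : ((S : Finset α) : Set α), γi (Set.inclusion (hSi i) x) = σ x) ∧ P i γi}) →
      ((S ∪ Finset.univ.biUnion V : Finset α) : Set α) → D :=
    fun f x =>
      if h : x.1 ∈ S then σ ⟨x.1, h⟩
      else (f (exI x h).choose).1 ⟨x.1, by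
        have := (exI x h).choose_spec
        simp only [Finset.coe_union, Set.mem_union, Finset.mem_coe]
        exact Or.inr this⟩
    with hg
  have key : ∀ f, ∀ i : Fin n, ∀ y : (((S ∪ V i : Finset α) : Set α)),
      g f (Set.inclusion (hsub i) y) = (f i).1 y := by
    intro f i y
    by_cases h : y.1 ∈ S
    · have hgy : g f (Set.inclusion (hsub i) y) = σ ⟨y.1, h⟩ := dif_pos h
      rw [hgy]
      exact ((f i).2.1 ⟨y.1, h⟩).symm
    · have hyV : y.1 ∈ V i := by
        have hy2 := y.2
        simp only [Finset.coe_union, Set.mem_union, Finset.mem_coe] at hy2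
        rcases hy2 with h' | h'
        · exact absurd h' h
        · exact h'
      have hch := (exI (Set.inclusion (hsub i) y) h).choose_spec
      have hji : (exI (Set.inclusion (hsub i) y) h).choose = i := by
        by_contra hne
        exact (Finset.disjoint_left.1 (hVV _ i hne) hch) hyV
      have hgy : g f (Set.inclusion (hsub i) y) =
          (f (exI (Set.inclusion (hsub i) y) h).choose).1 ⟨y.1, _⟩ := dif_neg h
      rw [hgy]
      have haux : ∀ j, j = i → ∀ hm : (y.1 : α) ∈ ((S ∪ V j : Finset α) : Set α),
          (f j).1 ⟨y.1, hm⟩ = (f i).1 y := by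
        rintro j rfl hm
        exact congrArg (f j).1 (Subtype.ext rfl)
      exact haux _ hji _
  refine ⟨fun γ i => ⟨γ.1 ∘ Set.inclusion (hsub i), fun x => γ.2.1 x, γ.2.2 i⟩,
    fun f => ⟨g f, fun x => dif_pos x.2, fun i => by
      have hcomp : g f ∘ Set.inclusion (hsub i) = (f i).1 := funext fun y => key f i y
      rw [hcomp]; exact (f i).2.2⟩, ?_, ?_⟩
  · intro γ
    refine Subtype.ext (funext fun x => ?_)
    set fγ := fun i : Fin n => (⟨γ.1 ∘ Set.inclusion (hsub i), fun x => γ.2.1 x, γ.2.2 i⟩ :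
      {γi : (((S ∪ V i : Finset α) : Set α)) → D //
        (∀ x : ((S : Finset α) : Set α), γi (Set.inclusion (hSi i) x) = σ x) ∧ P i γi}) with hfγ
    show g fγ x = γ.1 x
    by_cases h : x.1 ∈ S
    · have hgx : g fγ x = σ ⟨x.1, h⟩ := dif_pos h
      rw [hgx]
      exact (γ.2.1 ⟨x.1, h⟩).symm
    · obtain ⟨i, hi⟩ := exI x h
      have hm : x.1 ∈ ((S ∪ V i : Finset α) : Set α) := by
        simp only [Finset.coe_union, Set.mem_union, Finset.mem_coe]; exact Or.inr hi
      show g fγ (Set.inclusion (hsub i) ⟨x.1, hm⟩) = γ.1 x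
      rw [key]
      rfl
  · intro f
    funext i
    exact Subtype.ext (funext fun y => key f i y)
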